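/- In the setting of a weakly increasing Markov chain on positive integers with no absorbing states, the expected occupation times g_j := E[G_j] satisfy g_j = h_j/(1 − p_{j,j}), and the sequence (g_j) is the unique nonnegative solution of the system g_j = p_{0,j} + ∑_{i=1}^∞ g_i p_{i,j} for all j ≥ 1, where p_{0,j} := P(Q_0 = j). -/

import Mathlib

/-!
By the Markov property, `P(Q_{k+1} = j) = ∑ᵢ P(Q_k = i) p_{i,j}`; summing over `k` gives the
potential equations for `g_j = ∑ₖ P(Q_k = j)`. Since `p_{i,j} = 0` for `j < i`, the chain is almost
surely nondecreasing, so it enters `j` at most once, either at time `0` or by a jump from some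
`i < j`. Taking expectations, `h_j = p_{0,j} + ∑_{i<j} g_i p_{i,j}`, and the potential equation at
`j` becomes `g_j = h_j + g_j p_{j,j}`. The partial sums of `g_j` are finite and satisfy the same
relation as an inequality, so `g_j ≤ h_j / (1 - p_{j,j}) < ∞`, and then `g_j = h_j / (1 - p_{j,j})`.
Uniqueness: the equation at `j` involves only the values at `i ≤ j`, and a finite `x` with
`x = c + x q`, `q < 1`, is determined by `c` and `q`.
-/

open MeasureTheory Finset Function
open scoped ENNReal

namespace ENNReal

theorem mul_one_sub {x q : ℝ≥0∞} (hx : x ≠ ∞) : x * (1 - q) = x - x * q := by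
  rw [ENNReal.mul_sub fun _ _ => hx, mul_one]

theorem le_div_one_sub_of_le_add_mul {x C q : ℝ≥0∞} (hx : x ≠ ∞) (hq : q < 1)
    (h : x ≤ C + x * q) : x ≤ C / (1 - q) := by
  rw [ENNReal.le_div_iff_mul_le (.inl (tsub_pos_of_lt hq).ne') (.inl (by simp)),
    mul_one_sub hx]
  exact tsub_le_iff_right.2 h

theorem eq_div_one_sub_of_eq_add_mul {x C q : ℝ≥0∞} (hx : x ≠ ∞) (hq : q < 1)
    (h : x = C + x * q) : x = C / (1 - q) := by
  rw [ENNReal.eq_div_iff (tsub_pos_of_lt hq).ne' (by simp), mul_comm,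
    mul_one_sub hx]
  exact ENNReal.sub_eq_of_eq_add (ENNReal.mul_ne_top hx (hq.trans ENNReal.one_lt_top).ne) h

end ENNReal

theorem pairwise_disjoint_inter_fiber {α β : Type*} (A : Set α) (f : α → β) :
    Pairwise (Disjoint on fun b => A ∩ {a | f a = b}) :=
  fun _ _ h => ((pairwise_disjoint_fiber f) h).mono inf_le_right inf_le_right

open Classical in
theorem Monotone.ite_exists_eq {q : ℕ → ℕ} (hq : Monotone q) (j : ℕ) :
    (if ∃ n, q n = j then 1 else 0 : ℝ≥0∞) =
      (if q 0 = j then 1 else 0) + ∑' k, if q k < j ∧ q (k + 1) = j then 1 else 0 := by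
  by_cases h0 : q 0 = j
  · have hnone : ∀ k, ¬(q k < j ∧ q (k + 1) = j) := fun k h =>
      (h0 ▸ h.1).not_ge (hq (Nat.zero_le k))
    simp [hnone, h0, show ∃ n, q n = j from ⟨0, h0⟩]
  by_cases hhit : ∃ n, q n = j
  · obtain ⟨m, hm⟩ : ∃ m, Nat.find hhit = m + 1 :=
      Nat.exists_eq_succ_of_ne_zero fun h => h0 (h ▸ Nat.find_spec hhit)
    have hentry : ∀ k, q k < j ∧ q (k + 1) = j ↔ k = m := by
      intro k
      constructor
      · rintro ⟨hlt, heq⟩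
        have hmk : m + 1 ≤ k + 1 := hm ▸ Nat.find_min' hhit heq
        by_contra hne
        have hjm : q (m + 1) = j := hm ▸ Nat.find_spec hhit
        exact hlt.not_ge (hjm ▸ hq (by omega : m + 1 ≤ k))
      · rintro rfl
        have hjm : q (k + 1) = j := hm ▸ Nat.find_spec hhit
        exact ⟨lt_of_le_of_ne (hjm ▸ hq k.le_succ)
          (Nat.find_min hhit (by omega : k < Nat.find hhit)), hjm⟩
    simp only [hentry, if_pos hhit, if_neg h0, zero_add, tsum_ite_eq]
  · have hnone : ∀ k, ¬(q k < j ∧ q (k + 1) = j) := fun k h => hhit ⟨k + 1, h.2⟩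
    simp [hnone, hhit, h0]

section Triangular

variable {p : ℕ → ℕ → ℝ≥0∞}

theorem tsum_mul_eq_sum_range_add (hinc : ∀ i j, j < i → p i j = 0) (x : ℕ → ℝ≥0∞)
    (j : ℕ) :
    ∑' i, x i * p i j = ∑ i ∈ range j, x i * p i j + x j * p j j := by
  rw [tsum_eq_sum (s := range (j + 1)) fun i hi => by
    rw [hinc i j (by simpa using hi), mul_zero], sum_range_succ]

theorem eq_of_forall_eq_add_tsum_mul (hinc : ∀ i j, j < i → p i j = 0)
    (hdiag : ∀ j, p j j < 1) {c x y : ℕ → ℝ≥0∞} (hx : ∀ j, x j ≠ ∞) (hy : ∀ j, y j ≠ ∞)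
    (hxc : ∀ j, x j = c j + ∑' i, x i * p i j) (hyc : ∀ j, y j = c j + ∑' i, y i * p i j) :
    x = y := by
  funext j
  induction j using Nat.strong_induction_on with
  | _ j ih =>
    have hsum : ∑ i ∈ range j, x i * p i j = ∑ i ∈ range j, y i * p i j :=
      sum_congr rfl fun i hi => by rw [ih i (mem_range.1 hi)]
    have hxj := hxc j
    have hyj := hyc j
    rw [tsum_mul_eq_sum_range_add hinc, ← add_assoc] at hxj hyj
    rw [ENNReal.eq_div_one_sub_of_eq_add_mul (hx j) (hdiag j) hxj,
      ENNReal.eq_div_one_sub_of_eq_add_mul (hy j) (hdiag j) hyj, hsum]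

variable {u : ℕ → ℕ → ℝ≥0∞}

theorem tsum_eq_add_tsum_tsum_mul (hu : ∀ k j, u (k + 1) j = ∑' i, u k i * p i j) (j : ℕ) :
    ∑' k, u k j = u 0 j + ∑' i, (∑' k, u k i) * p i j := by
  rw [tsum_eq_zero_add' ENNReal.summable]
  simp_rw [hu, ← ENNReal.tsum_mul_right]
  rw [ENNReal.tsum_comm]

theorem sum_range_succ_eq_add_tsum_sum_mul (hu : ∀ k j, u (k + 1) j = ∑' i, u k i * p i j)
    (t j : ℕ) :
    ∑ k ∈ range (t + 1), u k j = u 0 j + ∑' i, (∑ k ∈ range t, u k i) * p i j := by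
  simp_rw [sum_range_succ', hu, sum_mul]
  rw [Summable.tsum_finsetSum fun _ _ => ENNReal.summable, add_comm]

end Triangular

section MarkovChain

variable {Ω : Type*} [MeasurableSpace Ω]

def IsMarkovChain (P : Measure Ω) (Q : ℕ → Ω → ℕ) (p : ℕ → ℕ → ℝ≥0∞) : Prop :=
  ∀ (k : ℕ) (q : ℕ → ℕ) (j : ℕ), P ({ω | Q (k + 1) ω = j} ∩ {ω | ∀ l ≤ k, Q l ω = q l}) =
    p (q k) j * P {ω | ∀ l ≤ k, Q l ω = q l}

variable {P : Measure Ω} {Q : ℕ → Ω → ℕ} {p : ℕ → ℕ → ℝ≥0∞}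

theorem lintegral_ite_one_zero {π : Ω → Prop} [DecidablePred π]
    (hπ : MeasurableSet {ω | π ω}) :
    ∫⁻ ω, (if π ω then 1 else 0) ∂P = P {ω | π ω} := by
  simpa [Set.indicator_apply] using lintegral_indicator_one (μ := P) hπ

theorem measurableSet_eq_of_measurable (hQ : ∀ k, Measurable (Q k)) (k j : ℕ) :
    MeasurableSet {ω | Q k ω = j} :=
  hQ k (measurableSet_singleton j)

theorem lintegral_tsum_ite_eq (hQ : ∀ k, Measurable (Q k)) (j : ℕ) :
    ∫⁻ ω, ∑' n, (if Q n ω = j then 1 else 0) ∂P = ∑' n, P {ω | Q n ω = j} := by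
  rw [lintegral_tsum fun n => (Measurable.ite (measurableSet_eq_of_measurable hQ n j)
    measurable_const measurable_const).aemeasurable]
  exact tsum_congr fun n => lintegral_ite_one_zero (measurableSet_eq_of_measurable hQ n j)

theorem measure_succ_inter_eq (hQ : ∀ k, Measurable (Q k)) (hmarkov : IsMarkovChain P Q p)
    (k i j : ℕ) :
    P ({ω | Q (k + 1) ω = j} ∩ {ω | Q k ω = i}) = p i j * P {ω | Q k ω = i} := by
  let path : (Fin k → ℕ) → ℕ → ℕ := fun v l => if h : l < k then v ⟨l, h⟩ else i
  let C : (Fin k → ℕ) → Set Ω := fun v => {ω | ∀ l ≤ k, Q l ω = path v l}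
  have hC : {ω | Q k ω = i} = ⋃ v, C v := by
    ext ω
    simp only [Set.mem_ofPred_eq, Set.mem_iUnion, C, path]
    constructor
    · intro h
      refine ⟨fun l => Q l ω, fun l hl => ?_⟩
      rcases hl.lt_or_eq with hl | rfl
      · simp [hl]
      · simp [h]
    · rintro ⟨v, hv⟩
      simpa using hv k le_rfl
  have hdisj : Pairwise (Disjoint on C) := by
    intro v w hvw
    refine Set.disjoint_left.2 fun ω hv hw => hvw (funext fun l => ?_)
    simpa [path] using (hv l l.2.le).symm.trans (hw l l.2.le)
  have hmeas : ∀ v, MeasurableSet (C v) := fun v => by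
    simp only [C, Set.ofPred_forall]
    exact .iInter fun l => .iInter fun _ => hQ l (measurableSet_singleton _)
  rw [hC, Set.inter_iUnion, measure_iUnion hdisj hmeas, ← ENNReal.tsum_mul_left,
    measure_iUnion (f := fun v => {ω | Q (k + 1) ω = j} ∩ C v)
      (fun v w h => (hdisj h).mono inf_le_right inf_le_right)
      fun v => (measurableSet_eq_of_measurable hQ _ j).inter (hmeas v)]
  refine tsum_congr fun v => ?_
  simpa [path] using hmarkov k (path v) j

theorem measure_succ_eq_tsum_mul (hQ : ∀ k, Measurable (Q k)) (hmarkov : IsMarkovChain P Q p)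
    (k j : ℕ) :
    P {ω | Q (k + 1) ω = j} = ∑' i, P {ω | Q k ω = i} * p i j := by
  have hpart : {ω | Q (k + 1) ω = j} = ⋃ i, {ω | Q (k + 1) ω = j} ∩ {ω | Q k ω = i} := by
    ext ω; simp
  rw [hpart, measure_iUnion (pairwise_disjoint_inter_fiber _ _)
    fun i => (measurableSet_eq_of_measurable hQ _ j).inter
      (measurableSet_eq_of_measurable hQ k i)]
  simp_rw [measure_succ_inter_eq hQ hmarkov, mul_comm]

theorem ae_monotone_of_transition_eq_zero (hQ : ∀ k, Measurable (Q k))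
    (hmarkov : IsMarkovChain P Q p) (hinc : ∀ i j, j < i → p i j = 0) :
    ∀ᵐ ω ∂P, Monotone fun k => Q k ω := by
  have hstep : ∀ k, ∀ᵐ ω ∂P, Q k ω ≤ Q (k + 1) ω := by
    intro k
    have hsub : {ω | ¬ Q k ω ≤ Q (k + 1) ω} ⊆
        ⋃ i, ⋃ j, ⋃ (_ : j < i), {ω | Q (k + 1) ω = j} ∩ {ω | Q k ω = i} := by
      intro ω hω
      simpa using hω
    refine measure_mono_null hsub (measure_iUnion_null fun i => measure_iUnion_null fun j =>
      measure_iUnion_null fun hji => ?_)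
    rw [measure_succ_inter_eq hQ hmarkov, hinc i j hji, zero_mul]
  filter_upwards [ae_all_iff.2 hstep] with ω hω using monotone_nat_of_le_succ hω

theorem measure_exists_eq (hQ : ∀ k, Measurable (Q k)) (hmarkov : IsMarkovChain P Q p)
    (hinc : ∀ i j, j < i → p i j = 0) (j : ℕ) :
    P {ω | ∃ n, Q n ω = j} =
      P {ω | Q 0 ω = j} + ∑ i ∈ range j, (∑' k, P {ω | Q k ω = i}) * p i j := by
  classical
  have hentry : ∀ k, {ω | Q k ω < j ∧ Q (k + 1) ω = j} =
      ⋃ i ∈ range j, {ω | Q (k + 1) ω = j} ∩ {ω | Q k ω = i} := by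
    intro k; ext ω; simp [and_comm]
  have hmeas_entry : ∀ k, MeasurableSet {ω | Q k ω < j ∧ Q (k + 1) ω = j} := fun k => by
    rw [hentry k]
    exact Finset.measurableSet_biUnion _ fun i _ =>
      (measurableSet_eq_of_measurable hQ _ j).inter (measurableSet_eq_of_measurable hQ k i)
  have hmeas_hit : MeasurableSet {ω | ∃ n, Q n ω = j} := by
    simp only [Set.ofPred_exists]
    exact .iUnion fun n => measurableSet_eq_of_measurable hQ n j
  calc P {ω | ∃ n, Q n ω = j}
      = ∫⁻ ω, (if ∃ n, Q n ω = j then 1 else 0) ∂P := (lintegral_ite_one_zero hmeas_hit).symm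
    _ = ∫⁻ ω, ((if Q 0 ω = j then 1 else 0) +
          ∑' k, if Q k ω < j ∧ Q (k + 1) ω = j then 1 else 0) ∂P := by
        refine lintegral_congr_ae ?_
        filter_upwards [ae_monotone_of_transition_eq_zero hQ hmarkov hinc] with ω hω
        exact hω.ite_exists_eq j
    _ = P {ω | Q 0 ω = j} + ∑' k, P {ω | Q k ω < j ∧ Q (k + 1) ω = j} := by
        rw [lintegral_add_left (measurable_const.ite (measurableSet_eq_of_measurable hQ 0 j)
            measurable_const),
          lintegral_tsum fun k =>
            (measurable_const.ite (hmeas_entry k) measurable_const).aemeasurable,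
          lintegral_ite_one_zero (measurableSet_eq_of_measurable hQ 0 j)]
        simp_rw [lintegral_ite_one_zero (hmeas_entry _)]
    _ = P {ω | Q 0 ω = j} + ∑' k, ∑ i ∈ range j, P {ω | Q k ω = i} * p i j := by
        congr 1
        refine tsum_congr fun k => ?_
        rw [hentry k,
          measure_biUnion_finset (fun i _ i' _ h => pairwise_disjoint_inter_fiber _ _ h)
            fun i _ => (measurableSet_eq_of_measurable hQ _ j).inter
              (measurableSet_eq_of_measurable hQ k i)]
        simp_rw [measure_succ_inter_eq hQ hmarkov, mul_comm]
    _ = _ := by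
        rw [Summable.tsum_finsetSum fun _ _ => ENNReal.summable]
        simp_rw [ENNReal.tsum_mul_right]

theorem tsum_measure_eq_div (hQ : ∀ k, Measurable (Q k)) (hmarkov : IsMarkovChain P Q p)
    (hinc : ∀ i j, j < i → p i j = 0) [IsFiniteMeasure P] {j : ℕ} (hj : p j j < 1) :
    ∑' k, P {ω | Q k ω = j} = P {ω | ∃ n, Q n ω = j} / (1 - p j j) := by
  have hstep := measure_succ_eq_tsum_mul hQ hmarkov
  have hentry := measure_exists_eq hQ hmarkov hinc j
  have hfixed : ∑' k, P {ω | Q k ω = j} =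
      P {ω | ∃ n, Q n ω = j} + (∑' k, P {ω | Q k ω = j}) * p j j := by
    rw [hentry, add_assoc, ← tsum_mul_eq_sum_range_add hinc]
    exact tsum_eq_add_tsum_tsum_mul (u := fun k i => P {ω | Q k ω = i}) hstep j
  -- `hfixed` does not exclude `∞`; the finite partial sums satisfy it as an inequality.
  have hpartial : ∀ t, ∑ k ∈ range t, P {ω | Q k ω = j} ≤
      P {ω | ∃ n, Q n ω = j} / (1 - p j j) := by
    intro t
    refine ENNReal.le_div_one_sub_of_le_add_mul
      (ENNReal.sum_ne_top.2 fun k _ => measure_ne_top P _) hj ?_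
    calc ∑ k ∈ range t, P {ω | Q k ω = j}
        ≤ ∑ k ∈ range (t + 1), P {ω | Q k ω = j} :=
          sum_le_sum_of_subset (range_subset_range.2 t.le_succ)
      _ = P {ω | Q 0 ω = j} + ∑ i ∈ range j, (∑ k ∈ range t, P {ω | Q k ω = i}) * p i j
            + (∑ k ∈ range t, P {ω | Q k ω = j}) * p j j := by
          rw [sum_range_succ_eq_add_tsum_sum_mul (u := fun k i => P {ω | Q k ω = i}) hstep,
            tsum_mul_eq_sum_range_add hinc, add_assoc]
      _ ≤ P {ω | Q 0 ω = j} + ∑ i ∈ range j, (∑' k, P {ω | Q k ω = i}) * p i j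
            + (∑ k ∈ range t, P {ω | Q k ω = j}) * p j j := by
          gcongr
          exact ENNReal.sum_le_tsum _
      _ = _ := by rw [hentry]
  have hfin : ∑' k, P {ω | Q k ω = j} ≠ ∞ :=
    ne_top_of_le_ne_top (ENNReal.div_ne_top (measure_ne_top P _) (tsub_pos_of_lt hj).ne')
      (ENNReal.tsum_le_of_sum_range_le hpartial)
  exact ENNReal.eq_div_one_sub_of_eq_add_mul hfin hj hfixed

theorem tsum_measure_eq_add_tsum_succ_mul (hQ : ∀ k, Measurable (Q k))
    (hmarkov : IsMarkovChain P Q p) (hpos : ∀ k ω, 1 ≤ Q k ω) (j : ℕ) :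
    ∑' k, P {ω | Q k ω = j} =
      P {ω | Q 0 ω = j} + ∑' i, (∑' k, P {ω | Q k ω = i + 1}) * p (i + 1) j := by
  have hempty : ∀ k, {ω | Q k ω = 0} = ∅ := fun k =>
    Set.eq_empty_of_forall_notMem fun ω h => (hpos k ω).not_gt (by simp_all)
  rw [tsum_eq_add_tsum_tsum_mul (u := fun k i => P {ω | Q k ω = i})
    (measure_succ_eq_tsum_mul hQ hmarkov), tsum_eq_zero_add' ENNReal.summable]
  simp [hempty]

end MarkovChain

theorem potential_equations_unique_solution_general
    {Ω : Type*} [MeasurableSpace Ω] (P : Measure Ω) [IsProbabilityMeasure P]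
    (Q : ℕ → Ω → ℕ) (hQmeas : ∀ k, Measurable (Q k))
    (hpos : ∀ k ω, 1 ≤ Q k ω)
    (p : ℕ → ℕ → ℝ≥0∞)
    (hinc : ∀ i j, j < i → p i j = 0)
    (hnoabs : ∀ j, 1 ≤ j → p j j < 1)
    (hmarkov : ∀ (k : ℕ) (q : ℕ → ℕ) (j : ℕ),
      P ({ω | Q (k + 1) ω = j} ∩ {ω | ∀ l ≤ k, Q l ω = q l})
        = p (q k) j * P {ω | ∀ l ≤ k, Q l ω = q l})
    (g : ℕ → ℝ≥0∞)
    (hg : ∀ j, g j = ∫⁻ ω, ∑' n, (if Q n ω = j then 1 else 0) ∂P) :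
    (∀ j, 1 ≤ j → g j = P {ω | ∃ n, Q n ω = j} / (1 - p j j))
    ∧ (∀ j, 1 ≤ j → g j = P {ω | Q 0 ω = j} + ∑' i, g (i + 1) * p (i + 1) j)
    ∧ (∀ g' : ℕ → ℝ≥0∞, (∀ j, g' j ≠ ⊤) →
        (∀ j, 1 ≤ j → g' j = P {ω | Q 0 ω = j} + ∑' i, g' (i + 1) * p (i + 1) j) →
        ∀ j, 1 ≤ j → g' j = g j) := by
  have hocc : ∀ j, g j = ∑' k, P {ω | Q k ω = j} := fun j =>
    (hg j).trans (lintegral_tsum_ite_eq hQmeas j)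
  have hformula : ∀ j, 1 ≤ j → g j = P {ω | ∃ n, Q n ω = j} / (1 - p j j) := fun j hj =>
    (hocc j).trans (tsum_measure_eq_div hQmeas hmarkov hinc (hnoabs j hj))
  have hpot : ∀ j, g j = P {ω | Q 0 ω = j} + ∑' i, g (i + 1) * p (i + 1) j := fun j => by
    simp_rw [hocc]
    exact tsum_measure_eq_add_tsum_succ_mul hQmeas hmarkov hpos j
  refine ⟨hformula, fun j _ => hpot j, fun g' hg' hg'pot j hj => ?_⟩
  obtain ⟨n, rfl⟩ := Nat.exists_eq_add_of_le' hj
  have hfin : ∀ n, g (n + 1) ≠ ⊤ := fun n => by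
    rw [hformula (n + 1) n.succ_pos]
    exact ENNReal.div_ne_top (measure_ne_top P _) (tsub_pos_of_lt (hnoabs _ n.succ_pos)).ne'
  -- Shifting indices by one turns the equations for `j ≥ 1` into a triangular system on `ℕ`.
  refine congrFun (eq_of_forall_eq_add_tsum_mul (p := fun i n => p (i + 1) (n + 1))
    (c := fun n => P {ω | Q 0 ω = n + 1}) (fun i n h => hinc _ _ (by omega))
    (fun n => hnoabs _ n.succ_pos) (fun n => hg' (n + 1)) hfin
    (fun n => hg'pot (n + 1) n.succ_pos) (fun n => hpot (n + 1))) n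

/-- For a weakly increasing Markov chain `Q` on the positive integers with no absorbing
states, the expected occupation times `g_j = E[G_j]` satisfy `g_j = h_j/(1 − p_{j,j})`,
and `(g_j)` is the unique (finite, nonnegative) solution of the potential equations
`g_j = p_{0,j} + ∑_{i≥1} g_i p_{i,j}`, where `p_{0,j} = P(Q_0 = j)`. -/
theorem potential_equations_unique_solution
    {Ω : Type*} [MeasurableSpace Ω] (P : Measure Ω) [IsProbabilityMeasure P]
    (Q : ℕ → Ω → ℕ) (hQmeas : ∀ k, Measurable (Q k))
    (hpos : ∀ k ω, 1 ≤ Q k ω)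
    (p : ℕ → ℕ → ℝ≥0∞)
    (hrow : ∀ i, 1 ≤ i → ∑' j, p i j = 1)
    (hinc : ∀ i j, j < i → p i j = 0)
    (hnoabs : ∀ j, 1 ≤ j → p j j < 1)
    (hmarkov : ∀ (k : ℕ) (q : ℕ → ℕ) (j : ℕ),
      P ({ω | Q (k + 1) ω = j} ∩ {ω | ∀ l ≤ k, Q l ω = q l})
        = p (q k) j * P {ω | ∀ l ≤ k, Q l ω = q l})
    (g : ℕ → ℝ≥0∞)
    (hg : ∀ j, g j = ∫⁻ ω, ∑' n, (if Q n ω = j then 1 else 0) ∂P) :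
    (∀ j, 1 ≤ j → g j = P {ω | ∃ n, Q n ω = j} / (1 - p j j))
    ∧ (∀ j, 1 ≤ j → g j = P {ω | Q 0 ω = j} + ∑' i, g (i + 1) * p (i + 1) j)
    ∧ (∀ g' : ℕ → ℝ≥0∞, (∀ j, g' j ≠ ⊤) →
        (∀ j, 1 ≤ j → g' j = P {ω | Q 0 ω = j} + ∑' i, g' (i + 1) * p (i + 1) j) →
        ∀ j, 1 ≤ j → g' j = g j) :=
  potential_equations_unique_solution_general P Q hQmeas hpos p hinc hnoabs hmarkov g hg
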